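/- arXiv:2002.08750 — 5 statements merged into one kernel-verified Lean document; each statement's English description precedes it below -/
import Mathlib

section
/- Let a, ℓ, n be non-negative integers with ℓ ≥ 1, and for an integer x let x̂ denote the least non-negative residue of x modulo ℓ. Then n²·â·(ℓ − â) ≡ (n·a)̂·(ℓ − (n·a)̂) (mod 2ℓ). In particular, the quantity R_n(a,ℓ) := (n²·â·(ℓ − â) − (n·a)̂·(ℓ − (n·a)̂))/(2ℓ) is an integer. -/
/-! Since `k (k - 1)` is always even, shifting `x` by `ℓ k` changes `x (ℓ - x)` by
`-2ℓ k x - ℓ² k (k - 1) ≡ 0 (mod 2ℓ)`, so `x (ℓ - x) mod 2ℓ` depends only on `x mod ℓ`; and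
`n² r (ℓ - r) - n r (ℓ - n r) = ℓ r n (n - 1)`. Hence
`n² â (ℓ - â) ≡ n â (ℓ - n â) ≡ (n a)̂ (ℓ - (n a)̂) (mod 2ℓ)`. -/

namespace Int

theorem mul_sub_self_modEq_of_modEq {ℓ x y : ℤ} (h : x ≡ y [ZMOD ℓ]) :
    x * (ℓ - x) ≡ y * (ℓ - y) [ZMOD 2 * ℓ] := by
  obtain ⟨k, hk⟩ := h.dvd
  obtain ⟨m, hm⟩ := even_mul_succ_self (k - 1)
  exact modEq_iff_dvd.mpr
    ⟨-(ℓ * m) - k * x, by linear_combination (ℓ - x - y - ℓ * k) * hk - ℓ * ℓ * hm⟩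

theorem sq_mul_mul_sub_modEq (n r ℓ : ℤ) :
    n ^ 2 * r * (ℓ - r) ≡ n * r * (ℓ - n * r) [ZMOD 2 * ℓ] := by
  obtain ⟨m, hm⟩ := even_mul_succ_self (n - 1)
  exact modEq_iff_dvd.mpr ⟨-(m * r), by linear_combination -(r * ℓ * hm)⟩

end Int

theorem greatest_common_valuation_stmt_0_general (a ℓ n : ℤ) :
    n ^ 2 * (a % ℓ) * (ℓ - a % ℓ) ≡ (n * a) % ℓ * (ℓ - (n * a) % ℓ) [ZMOD (2 * ℓ)] ∧
    ∃ R : ℤ, n ^ 2 * (a % ℓ) * (ℓ - a % ℓ) - (n * a) % ℓ * (ℓ - (n * a) % ℓ) = 2 * ℓ * R := by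
  have hres : n * (a % ℓ) ≡ (n * a) % ℓ [ZMOD ℓ] :=
    ((Int.mod_modEq a ℓ).mul_left n).trans (Int.mod_modEq (n * a) ℓ).symm
  have hmod := (Int.sq_mul_mul_sub_modEq n (a % ℓ) ℓ).trans
    (Int.mul_sub_self_modEq_of_modEq hres)
  obtain ⟨R, hR⟩ := hmod.symm.dvd
  exact ⟨hmod, R, hR⟩

/-- For non-negative integers `a`, `ℓ`, `n` with `ℓ ≥ 1`, writing `x % ℓ` for the least
non-negative residue of `x` modulo `ℓ`, we have
`n² · â · (ℓ − â) ≡ (n·a)̂ · (ℓ − (n·a)̂) (mod 2ℓ)`; in particular the quantity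
`R_n(a, ℓ) = (n² · â · (ℓ − â) − (n·a)̂ · (ℓ − (n·a)̂)) / (2ℓ)` is an integer. -/
theorem greatest_common_valuation_stmt_0 (a ℓ n : ℤ) (ha : 0 ≤ a) (hn : 0 ≤ n) (hℓ : 1 ≤ ℓ) :
    n ^ 2 * (a % ℓ) * (ℓ - a % ℓ) ≡ (n * a) % ℓ * (ℓ - (n * a) % ℓ) [ZMOD (2 * ℓ)] ∧
    ∃ R : ℤ, n ^ 2 * (a % ℓ) * (ℓ - a % ℓ) - (n * a) % ℓ * (ℓ - (n * a) % ℓ) = 2 * ℓ * R :=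
  greatest_common_valuation_stmt_0_general a ℓ n
end

section
/- Let P = (x, y) ∈ K² satisfy f(x, y) = y² + a₁xy + a₃y − x³ − a₂x² − a₄x − a₆ = 0, where a₁, a₂, a₃, a₄, a₆ ∈ R with v(a₃) > 0, v(a₄) > 0 and v(a₆) > 0. Then v(∂f/∂x(P)) = v(a₁y − 3x² − 2a₂x − a₄) > 0 and v(∂f/∂y(P)) = v(2y + a₁x + a₃) > 0 hold simultaneously if and only if v(x) > 0 and v(y) > 0. (That is, P has singular reduction modulo π if and only if v(x) > 0 and v(y) > 0.) -/
/-!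
Everything rests on the identity `x³ = 2f - x·f_x - y·f_y + a₄x + 2a₆ - a₃y`. If `v(x) < 0`, the
factorisation `y(y + a₁x + a₃) = x³ + a₂x² + a₄x + a₆` forces `v(y) > 3v(x)`, so when the partials
are integral every term on the right has valuation above `3v(x) = v(x³)`; hence a singular point
is integral. Modulo the maximal ideal, where `a₃`, `a₄`, `a₆` vanish, the identity then gives
`x³ = 0` at a singular point, so `x` and `y` reduce to `0`.
-/

theorem singular_point_eq_zero {k : Type*} [CommRing k] [IsDomain k] {a₁ a₂ x y : k}
    (hf : y ^ 2 + a₁ * x * y - x ^ 3 - a₂ * x ^ 2 = 0)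
    (hfx : a₁ * y - 3 * x ^ 2 - 2 * a₂ * x = 0) (hfy : 2 * y + a₁ * x = 0) :
    x = 0 ∧ y = 0 := by
  have hx : x = 0 :=
    pow_eq_zero_iff three_ne_zero |>.mp <| by linear_combination 2 * hf - x * hfx - y * hfy
  subst hx
  exact ⟨rfl, pow_eq_zero_iff two_ne_zero |>.mp (by linear_combination hf)⟩

theorem Ideal.mem_of_singular_point {A : Type*} [CommRing A] {I : Ideal A} [I.IsPrime]
    {a₁ a₂ x y : A} (hf : y ^ 2 + a₁ * x * y - x ^ 3 - a₂ * x ^ 2 ∈ I)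
    (hfx : a₁ * y - 3 * x ^ 2 - 2 * a₂ * x ∈ I) (hfy : 2 * y + a₁ * x ∈ I) :
    x ∈ I ∧ y ∈ I := by
  simp only [← Ideal.Quotient.eq_zero_iff_mem, map_add, map_sub, map_mul, map_pow,
    map_ofNat] at hf hfx hfy ⊢
  exact singular_point_eq_zero hf hfx hfy

namespace AddValuation

section

variable {R Γ : Type*} [CommRing R] [LinearOrderedAddCommGroupWithTop Γ] (v : AddValuation R Γ)
  {a₁ a₂ a₃ a₄ a₆ x y : R}

theorem le_map_mul_of_le {a z : R} {c : Γ} (ha : 0 ≤ v a) (hz : c ≤ v z) : c ≤ v (a * z) := by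
  rw [map_mul]
  exact hz.trans (le_add_of_nonneg_left ha)

theorem lt_map_mul_of_lt {a z : R} {c : Γ} (ha : 0 ≤ v a) (hz : c < v z) : c < v (a * z) := by
  rw [map_mul]
  exact hz.trans_le (le_add_of_nonneg_left ha)

theorem map_lt_sub {x y : R} {c : Γ} (hx : c < v x) (hy : c < v y) : c < v (x - y) :=
  Valuation.map_sub_lt v hx hy

theorem le_map_mul_add {a z b : R} {c : Γ} (hc : c ≤ 0) (ha : 0 ≤ v a) (hz : c ≤ v z)
    (hb : 0 ≤ v b) : c ≤ v (a * z + b) :=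
  v.map_le_add (v.le_map_mul_of_le ha hz) (hc.trans hb)

def integer : Subring R where
  carrier := {r | 0 ≤ v r}
  mul_mem' {r s} hr hs := by simpa using add_nonneg hr hs
  one_mem' := by simp
  add_mem' hr hs := v.map_le_add hr hs
  zero_mem' := by simp
  neg_mem' {r} hr := by simpa using hr

def posIdeal : Ideal v.integer where
  carrier := {r | 0 < v r}
  add_mem' hr hs := v.map_lt_add hr hs
  zero_mem' := by simp
  smul_mem' r s hs := by
    change 0 < v (r * s)
    exact v.lt_map_mul_of_lt r.2 hs

instance : v.posIdeal.IsPrime where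
  ne_top' := (Ideal.ne_top_iff_one _).mpr fun h1 ↦ by
    change 0 < v 1 at h1
    simp at h1
  mem_or_mem' {r s} h := by
    change 0 < v (r * s) at h
    change 0 < v r ∨ 0 < v s
    rw [map_mul] at h
    by_contra! hrs
    have hr : v r = 0 := le_antisymm hrs.1 r.2
    have hs : v s = 0 := le_antisymm hrs.2 s.2
    simp [hr, hs] at h

theorem map_y_nonneg_of_map_x_nonneg (ha₁ : 0 ≤ v a₁) (ha₂ : 0 ≤ v a₂) (ha₃ : 0 ≤ v a₃)
    (ha₄ : 0 ≤ v a₄) (ha₆ : 0 ≤ v a₆)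
    (hP : y ^ 2 + a₁ * x * y + a₃ * y - x ^ 3 - a₂ * x ^ 2 - a₄ * x - a₆ = 0) (hx : 0 ≤ v x) :
    0 ≤ v y := by
  by_contra! hy
  have hb : 0 ≤ v (a₁ * x + a₃) := v.le_map_mul_add le_rfl ha₁ hx ha₃
  have hcubic : 0 ≤ v (x ^ 3 + (a₂ * x ^ 2 + a₄ * x + a₆)) := by
    refine v.map_le_add ?_ (v.map_le_add (v.map_le_add ?_ ?_) ha₆)
    · rw [map_pow]; exact nsmul_nonneg hx 3
    · exact v.le_map_mul_of_le ha₂ (by rw [map_pow]; exact nsmul_nonneg hx 2)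
    · exact v.le_map_mul_of_le ha₄ hx
  have hfactor : y * (y + (a₁ * x + a₃)) = x ^ 3 + (a₂ * x ^ 2 + a₄ * x + a₆) := by
    linear_combination hP
  rw [← hfactor, map_mul, map_add_eq_of_lt_left _ (hy.trans_le hb)] at hcubic
  have hneg : v y + v y < 0 := (add_le_add_left hy.le (v y)).trans_lt (by rwa [zero_add])
  exact hneg.not_ge hcubic

theorem pos_of_singular_point (ha₁ : 0 ≤ v a₁) (ha₂ : 0 ≤ v a₂)
    (hx : 0 ≤ v x) (hy : 0 ≤ v y) (hf : 0 < v (y ^ 2 + a₁ * x * y - x ^ 3 - a₂ * x ^ 2))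
    (hfx : 0 < v (a₁ * y - 3 * x ^ 2 - 2 * a₂ * x)) (hfy : 0 < v (2 * y + a₁ * x)) :
    0 < v x ∧ 0 < v y :=
  Ideal.mem_of_singular_point (I := v.posIdeal) (a₁ := ⟨a₁, ha₁⟩) (a₂ := ⟨a₂, ha₂⟩)
    (x := ⟨x, hx⟩) (y := ⟨y, hy⟩) hf hfx hfy

theorem singular_of_pos (ha₁ : 0 ≤ v a₁) (ha₂ : 0 ≤ v a₂) (ha₃ : 0 < v a₃)
    (ha₄ : 0 < v a₄) (hx : 0 < v x) (hy : 0 < v y) :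
    0 < v (a₁ * y - 3 * x ^ 2 - 2 * a₂ * x - a₄) ∧ 0 < v (2 * y + a₁ * x + a₃) := by
  have hx2 : 0 < v (x ^ 2) := by rw [map_pow]; exact nsmul_pos hx two_ne_zero
  have h2a₂ : 0 ≤ v (2 * a₂) := v.integer.mul_mem (ofNat_mem v.integer 2) ha₂
  exact ⟨v.map_lt_sub (v.map_lt_sub (v.map_lt_sub (v.lt_map_mul_of_lt ha₁ hy)
      (v.lt_map_mul_of_lt (ofNat_mem v.integer 3) hx2)) (v.lt_map_mul_of_lt h2a₂ hx)) ha₄,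
    v.map_lt_add (v.map_lt_add (v.lt_map_mul_of_lt (ofNat_mem v.integer 2) hy)
      (v.lt_map_mul_of_lt ha₁ hx)) ha₃⟩

end

section
variable {R : Type*} [CommRing R] (v : AddValuation R (WithTop ℤ)) {a₁ a₂ a₃ a₄ a₆ x y : R}

theorem three_mul_lt_map_y_of_map_x_neg (ha₁ : 0 ≤ v a₁) (ha₂ : 0 ≤ v a₂) (ha₃ : 0 ≤ v a₃)
    (ha₄ : 0 ≤ v a₄) (ha₆ : 0 ≤ v a₆)
    (hP : y ^ 2 + a₁ * x * y + a₃ * y - x ^ 3 - a₂ * x ^ 2 - a₄ * x - a₆ = 0)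
    {n : ℤ} (hx : v x = n) (hn : n < 0) :
    ((3 * n : ℤ) : WithTop ℤ) < v y := by
  have hfactor : y * (y + (a₁ * x + a₃)) = x ^ 3 + (a₂ * x ^ 2 + a₄ * x + a₆) := by
    linear_combination hP
  have hcubic : v (x ^ 3 + (a₂ * x ^ 2 + a₄ * x + a₆)) = ((3 * n : ℤ) : WithTop ℤ) := by
    have hx3 : v (x ^ 3) = ((3 * n : ℤ) : WithTop ℤ) := by rw [map_pow, hx]; norm_cast
    have hrest : ((3 * n : ℤ) : WithTop ℤ) < v (a₂ * x ^ 2 + a₄ * x + a₆) := by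
      refine v.map_lt_add (v.map_lt_add (v.lt_map_mul_of_lt ha₂ ?_) (v.lt_map_mul_of_lt ha₄ ?_))
        (lt_of_lt_of_le ?_ ha₆)
      · rw [map_pow, hx]; norm_cast; rw [nsmul_eq_mul]; push_cast; omega
      · rw [hx]; norm_cast; omega
      · norm_cast; omega
    rw [map_add_eq_of_lt_left _ (hx3 ▸ hrest), hx3]
  have hb : (n : WithTop ℤ) ≤ v (a₁ * x + a₃) :=
    v.le_map_mul_add (by exact_mod_cast hn.le) ha₁ hx.ge ha₃
  by_contra! hy
  have hyb : v y < v (a₁ * x + a₃) :=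
    hy.trans_lt ((show ((3 * n : ℤ) : WithTop ℤ) < n by norm_cast; omega).trans_le hb)
  have hlhs := congrArg v hfactor
  rw [map_mul, map_add_eq_of_lt_left _ hyb, hcubic] at hlhs
  obtain ⟨m, hm⟩ := WithTop.ne_top_iff_exists.mp (ne_top_of_le_ne_top (WithTop.coe_ne_top) hy)
  rw [← hm] at hlhs hy
  norm_cast at hlhs hy
  omega

theorem map_x_nonneg_of_map_partials_nonneg (ha₁ : 0 ≤ v a₁) (ha₂ : 0 ≤ v a₂)
    (ha₃ : 0 ≤ v a₃) (ha₄ : 0 ≤ v a₄) (ha₆ : 0 ≤ v a₆)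
    (hP : y ^ 2 + a₁ * x * y + a₃ * y - x ^ 3 - a₂ * x ^ 2 - a₄ * x - a₆ = 0)
    (hfx : 0 ≤ v (a₁ * y - 3 * x ^ 2 - 2 * a₂ * x - a₄)) (hfy : 0 ≤ v (2 * y + a₁ * x + a₃)) :
    0 ≤ v x := by
  by_contra! hneg
  obtain ⟨n, hn⟩ := WithTop.ne_top_iff_exists.mp (ne_top_of_lt hneg)
  rw [← hn] at hneg
  norm_cast at hneg
  have hy := v.three_mul_lt_map_y_of_map_x_neg ha₁ ha₂ ha₃ ha₄ ha₆ hP hn.symm hneg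
  have hx : ((3 * n : ℤ) : WithTop ℤ) < v x := hn ▸ by norm_cast; omega
  have hx3 : v (x ^ 3) = ((3 * n : ℤ) : WithTop ℤ) := by rw [map_pow, ← hn]; norm_cast
  have hid : x ^ 3 = a₄ * x + 2 * a₆ - a₃ * y - ((a₁ * y - 3 * x ^ 2 - 2 * a₂ * x - a₄) * x +
      (2 * y + a₁ * x + a₃) * y) := by
    linear_combination 2 * hP
  have hlt : ((3 * n : ℤ) : WithTop ℤ) < v (x ^ 3) := by
    rw [hid]
    refine v.map_lt_sub (v.map_lt_sub (v.map_lt_add ?_ ?_) ?_) (v.map_lt_add ?_ ?_)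
    · exact v.lt_map_mul_of_lt ha₄ hx
    · exact (show ((3 * n : ℤ) : WithTop ℤ) < 0 by norm_cast; omega).trans_le
        (v.integer.mul_mem (ofNat_mem v.integer 2) ha₆)
    · exact v.lt_map_mul_of_lt ha₃ hy
    · exact v.lt_map_mul_of_lt hfx hx
    · exact v.lt_map_mul_of_lt hfy hy
  exact hlt.ne' hx3

theorem singular_iff_pos (ha₁ : 0 ≤ v a₁) (ha₂ : 0 ≤ v a₂) (ha₃ : 0 < v a₃) (ha₄ : 0 < v a₄)
    (ha₆ : 0 < v a₆) (hP : y ^ 2 + a₁ * x * y + a₃ * y - x ^ 3 - a₂ * x ^ 2 - a₄ * x - a₆ = 0) :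
    (0 < v (a₁ * y - 3 * x ^ 2 - 2 * a₂ * x - a₄) ∧ 0 < v (2 * y + a₁ * x + a₃)) ↔
      (0 < v x ∧ 0 < v y) := by
  refine ⟨fun ⟨hfx, hfy⟩ ↦ ?_, fun ⟨hx, hy⟩ ↦ v.singular_of_pos ha₁ ha₂ ha₃ ha₄ hx hy⟩
  have hx := v.map_x_nonneg_of_map_partials_nonneg ha₁ ha₂ ha₃.le ha₄.le ha₆.le hP hfx.le hfy.le
  have hy := v.map_y_nonneg_of_map_x_nonneg ha₁ ha₂ ha₃.le ha₄.le ha₆.le hP hx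
  refine v.pos_of_singular_point ha₁ ha₂ hx hy ?_ ?_ ?_
  · rw [show y ^ 2 + a₁ * x * y - x ^ 3 - a₂ * x ^ 2 = x * a₄ + a₆ - y * a₃ by
      linear_combination hP]
    exact v.map_lt_sub (v.map_lt_add (v.lt_map_mul_of_lt hx ha₄) ha₆) (v.lt_map_mul_of_lt hy ha₃)
  · rw [← sub_add_cancel (a₁ * y - 3 * x ^ 2 - 2 * a₂ * x) a₄]
    exact v.map_lt_add hfx ha₄
  · rw [← add_sub_cancel_right (2 * y + a₁ * x) a₃]
    exact v.map_lt_sub hfy ha₃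

end

end AddValuation

theorem greatest_common_valuation_stmt_2_general {K : Type*} [Field K]
    (v : K → WithTop ℤ)
    (hv_top : ∀ z : K, v z = ⊤ ↔ z = 0)
    (hv_mul : ∀ z w : K, v (z * w) = v z + v w)
    (hv_add : ∀ z w : K, min (v z) (v w) ≤ v (z + w))
    (a₁ a₂ a₃ a₄ a₆ : K)
    (ha₁ : 0 ≤ v a₁) (ha₂ : 0 ≤ v a₂) (ha₃ : 0 < v a₃)
    (ha₄ : 0 < v a₄) (ha₆ : 0 < v a₆)
    (x y : K)
    (hP : y ^ 2 + a₁ * x * y + a₃ * y - x ^ 3 - a₂ * x ^ 2 - a₄ * x - a₆ = 0) :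
    (0 < v (a₁ * y - 3 * x ^ 2 - 2 * a₂ * x - a₄) ∧ 0 < v (2 * y + a₁ * x + a₃)) ↔
      (0 < v x ∧ 0 < v y) := by
  have hv_one : v 1 = 0 := by
    obtain ⟨n, hn⟩ := WithTop.ne_top_iff_exists.mp (mt (hv_top 1).mp one_ne_zero)
    have h := hv_mul 1 1
    rw [one_mul, ← hn] at h
    rw [← hn]
    norm_cast at h ⊢
    omega
  exact (AddValuation.of v ((hv_top 0).mpr rfl) hv_one hv_add hv_mul).singular_iff_pos
    ha₁ ha₂ ha₃ ha₄ ha₆ hP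

/-- Let `K` be a field with a normalised discrete valuation `v` (a finite extension of `ℚ_p`)
with uniformiser `π`.  Let `P = (x, y) ∈ K²` satisfy
`f(x, y) = y² + a₁xy + a₃y − x³ − a₂x² − a₄x − a₆ = 0` with integral coefficients `aᵢ` and
`v(a₃) > 0`, `v(a₄) > 0`, `v(a₆) > 0`.  Then
`v(∂f/∂x(P)) = v(a₁y − 3x² − 2a₂x − a₄) > 0` and `v(∂f/∂y(P)) = v(2y + a₁x + a₃) > 0`
hold simultaneously (i.e. `P` has singular reduction) if and only if `v(x) > 0` and
`v(y) > 0`. -/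
theorem greatest_common_valuation_stmt_2 {K : Type*} [Field K]
    (v : K → WithTop ℤ)
    (hv_top : ∀ z : K, v z = ⊤ ↔ z = 0)
    (hv_mul : ∀ z w : K, v (z * w) = v z + v w)
    (hv_add : ∀ z w : K, min (v z) (v w) ≤ v (z + w))
    (π : K) (hπ : v π = 1)
    (a₁ a₂ a₃ a₄ a₆ : K)
    (ha₁ : 0 ≤ v a₁) (ha₂ : 0 ≤ v a₂) (ha₃ : 0 < v a₃)
    (ha₄ : 0 < v a₄) (ha₆ : 0 < v a₆)
    (x y : K)
    (hP : y ^ 2 + a₁ * x * y + a₃ * y - x ^ 3 - a₂ * x ^ 2 - a₄ * x - a₆ = 0) :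
    (0 < v (a₁ * y - 3 * x ^ 2 - 2 * a₂ * x - a₄) ∧ 0 < v (2 * y + a₁ * x + a₃)) ↔
      (0 < v x ∧ 0 < v y) :=
  greatest_common_valuation_stmt_2_general v hv_top hv_mul hv_add a₁ a₂ a₃ a₄ a₆ ha₁ ha₂ ha₃ ha₄ ha₆
    x y hP
end

section
/- Let x = u²x' + r, y = u³y' + u²sx' + t (with u ≠ 0) be a change of variables transforming the Weierstrass curve E into the Weierstrass curve E', let P = (x, y) be a point on E and P' = (x', y') its image on E'. Then for every n ≥ 1, φₙ(P) = u^{2n² − 2}·(u²·φₙ'(P') + r·(ψₙ')²(P')), where φₙ, ψₙ are the polynomials attached to E and φₙ', ψₙ' those attached to E'. -/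
/-!
At a point `(x, y)`, `ψₙ` evaluates to the normalised elliptic divisibility sequence with
parameters `ψ₂(x, y)`, `ψ₃(x)` and `ψ₄(x)/ψ₂(x, y)`. Under the change of variables these three
parameters are multiplied by `u³`, `u⁸` and `u¹²`, and rescaling the parameters with these weights
multiplies the `n`-th term of the sequence by `u^(n² - 1)`, as the recursions are homogeneous.
Substituting `x = u²x' + r` into `φₙ = xψₙ² - ψₙ₊₁ψₙ₋₁` then gives the formula for `φₙ`.
-/

open Polynomial

section EDS

variable {R : Type*} [CommRing R]

/-- Even terms of `normEDS b c d` are those of `preNormEDS' (b ^ 4) c d` times `b`, which has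
weight `3`; hence `n² - 4` rather than `n² - 1` there. -/
def preNormEDSWeight (n : ℕ) : ℕ := n ^ 2 - if Even n then 4 else 1

lemma preNormEDSWeight_even_step (m : ℕ) :
    preNormEDSWeight (2 * (m + 3)) = 2 * preNormEDSWeight (m + 2) + preNormEDSWeight (m + 3) +
        preNormEDSWeight (m + 5) ∧
      preNormEDSWeight (2 * (m + 3)) = preNormEDSWeight (m + 1) + preNormEDSWeight (m + 3) +
        2 * preNormEDSWeight (m + 4) := by
  unfold preNormEDSWeight
  rcases Nat.even_or_odd' m with ⟨j, rfl | rfl⟩ <;> simp [parity_simps] <;> ring_nf <;> omega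

lemma preNormEDSWeight_odd_step (m : ℕ) :
    preNormEDSWeight (2 * (m + 2) + 1) = preNormEDSWeight (m + 4) + 3 * preNormEDSWeight (m + 2) +
        (if Even m then 12 else 0) ∧
      preNormEDSWeight (2 * (m + 2) + 1) = preNormEDSWeight (m + 1) +
        3 * preNormEDSWeight (m + 3) + (if Even m then 0 else 12) := by
  unfold preNormEDSWeight
  rcases Nat.even_or_odd' m with ⟨j, rfl | rfl⟩ <;> simp [parity_simps] <;> ring_nf <;> omega

lemma preNormEDS'_scale (v b c d : R) (n : ℕ) :
    preNormEDS' (v ^ 12 * b) (v ^ 8 * c) (v ^ 12 * d) n =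
      v ^ preNormEDSWeight n * preNormEDS' b c d n := by
  induction n using normEDSRec with
  | zero => simp
  | one => simp [preNormEDSWeight]
  | two => simp [preNormEDSWeight]
  | three => simp [preNormEDSWeight, show ¬ Even 3 by decide]
  | four => simp [preNormEDSWeight, show Even 4 by decide]
  | even m h1 h2 h3 h4 h5 =>
    obtain ⟨e1, e2⟩ := preNormEDSWeight_even_step m
    rw [preNormEDS'_even, preNormEDS'_even, h1, h2, h3, h4, h5, mul_sub]
    congr 1
    · rw [e1]; ring
    · rw [e2]; ring
  | odd m h1 h2 h3 h4 =>
    obtain ⟨e1, e2⟩ := preNormEDSWeight_odd_step m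
    rw [preNormEDS'_odd, preNormEDS'_odd, h1, h2, h3, h4, mul_sub]
    congr 1
    · rw [e1]; split_ifs <;> ring
    · rw [e2]; split_ifs <;> ring

lemma normEDS_scale (v b c d : R) (n : ℕ) :
    normEDS (v ^ 3 * b) (v ^ 8 * c) (v ^ 12 * d) n = v ^ (n ^ 2 - 1) * normEDS b c d n := by
  rcases n.eq_zero_or_pos with rfl | hn
  · simp
  rw [normEDS_ofNat, normEDS_ofNat, mul_pow, ← pow_mul, preNormEDS'_scale, preNormEDSWeight]
  split_ifs with he
  · have : 2 ^ 2 ≤ n ^ 2 := Nat.pow_le_pow_left (by obtain ⟨k, rfl⟩ := he; omega) 2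
    rw [show n ^ 2 - 1 = n ^ 2 - 4 + 3 by omega]
    ring
  · ring

end EDS

namespace WeierstrassCurve

lemma evalEval_ψ {R : Type*} [CommRing R] (W : WeierstrassCurve R) (x y : R) (n : ℤ) :
    (W.ψ n).evalEval x y = normEDS (W.ψ₂.evalEval x y) (W.Ψ₃.eval x) (W.preΨ₄.eval x) n := by
  rw [WeierstrassCurve.ψ, ← coe_evalEvalRingHom, map_normEDS]
  simp

lemma evalEval_φ {R : Type*} [CommRing R] (W : WeierstrassCurve R) (x y : R) (n : ℤ) :
    (W.φ n).evalEval x y =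
      x * (W.ψ n).evalEval x y ^ 2 - (W.ψ (n + 1)).evalEval x y * (W.ψ (n - 1)).evalEval x y := by
  simp only [WeierstrassCurve.φ, evalEval_sub, evalEval_mul, evalEval_pow, evalEval_C, eval_X]

section VariableChange

variable {K : Type*} [Field K] (W : WeierstrassCurve K) (C : VariableChange K) (x' y' : K)

lemma evalEval_ψ₂_variableChange :
    W.ψ₂.evalEval (C.u ^ 2 * x' + C.r) (C.u ^ 3 * y' + C.u ^ 2 * C.s * x' + C.t) =
      C.u ^ 3 * (C • W).ψ₂.evalEval x' y' := by
  simp only [ψ₂, Affine.evalEval_polynomialY, variableChange_a₁, variableChange_a₃,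
    Units.val_inv_eq_inv_val]
  field_simp
  ring

lemma eval_Ψ₃_variableChange :
    W.Ψ₃.eval (C.u ^ 2 * x' + C.r) = C.u ^ 8 * (C • W).Ψ₃.eval x' := by
  simp only [Ψ₃, eval_add, eval_mul, eval_pow, eval_C, eval_X, eval_ofNat, variableChange_b₂,
    variableChange_b₄, variableChange_b₆, variableChange_b₈, Units.val_inv_eq_inv_val]
  field_simp
  ring

lemma eval_preΨ₄_variableChange :
    W.preΨ₄.eval (C.u ^ 2 * x' + C.r) = C.u ^ 12 * (C • W).preΨ₄.eval x' := by
  simp only [preΨ₄, eval_add, eval_mul, eval_pow, eval_C, eval_X, eval_ofNat,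
    variableChange_b₂, variableChange_b₄, variableChange_b₆, variableChange_b₈,
    Units.val_inv_eq_inv_val]
  field_simp
  linear_combination (2 * C.u ^ 2 * x' * C.r + C.r ^ 2) * W.b_relation

lemma evalEval_ψ_variableChange (n : ℕ) :
    (W.ψ n).evalEval (C.u ^ 2 * x' + C.r) (C.u ^ 3 * y' + C.u ^ 2 * C.s * x' + C.t) =
      C.u ^ (n ^ 2 - 1) * ((C • W).ψ n).evalEval x' y' := by
  rw [evalEval_ψ, evalEval_ψ, evalEval_ψ₂_variableChange, eval_Ψ₃_variableChange,
    eval_preΨ₄_variableChange, normEDS_scale]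

lemma evalEval_φ_variableChange (n : ℕ) (hn : 1 ≤ n) :
    (W.φ n).evalEval (C.u ^ 2 * x' + C.r) (C.u ^ 3 * y' + C.u ^ 2 * C.s * x' + C.t) =
      C.u ^ (2 * n ^ 2 - 2) *
        (C.u ^ 2 * ((C • W).φ n).evalEval x' y' + C.r * ((C • W).ψ n).evalEval x' y' ^ 2) := by
  obtain ⟨m, rfl⟩ : ∃ m, n = m + 1 := ⟨n - 1, by omega⟩
  rcases m with _ | m
  · simp [evalEval_C]
  have hsucc : ((m + 2 : ℕ) : ℤ) + 1 = ((m + 3 : ℕ) : ℤ) := by push_cast; ring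
  have hpred : ((m + 2 : ℕ) : ℤ) - 1 = ((m + 1 : ℕ) : ℤ) := by push_cast; ring
  rw [evalEval_φ, evalEval_φ, hsucc, hpred, evalEval_ψ_variableChange, evalEval_ψ_variableChange,
    evalEval_ψ_variableChange, show 2 * (m + 1 + 1) ^ 2 - 2 = 2 * m ^ 2 + 8 * m + 6 by ring_nf; omega,
    show (m + 2) ^ 2 - 1 = m ^ 2 + 4 * m + 3 by ring_nf; omega,
    show (m + 3) ^ 2 - 1 = m ^ 2 + 6 * m + 8 by ring_nf; omega,
    show (m + 1) ^ 2 - 1 = m ^ 2 + 2 * m by ring_nf; omega]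
  ring

end VariableChange

end WeierstrassCurve

theorem greatest_common_valuation_stmt_3_general {K : Type*} [Field K]
    (W : WeierstrassCurve K) (u : Kˣ) (r s t : K)
    (W' : WeierstrassCurve K) (hW' : W' = (⟨u, r, s, t⟩ : WeierstrassCurve.VariableChange K) • W)
    (x y x' y' : K)
    (hx : x = (u : K) ^ 2 * x' + r)
    (hy : y = (u : K) ^ 3 * y' + (u : K) ^ 2 * s * x' + t)
    (n : ℕ) (hn : 1 ≤ n) :
    (W.φ n).evalEval x y =
      (u : K) ^ (2 * n ^ 2 - 2) *
        ((u : K) ^ 2 * (W'.φ n).evalEval x' y' + r * (W'.ψ n).evalEval x' y' ^ 2) := by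
  subst hW' hx hy
  exact W.evalEval_φ_variableChange ⟨u, r, s, t⟩ x' y' n hn

/-- Let `K` be a field and `E/K` a Weierstrass curve.  Let `x = u²x' + r`,
`y = u³y' + u²sx' + t` (with `u ≠ 0`) be a change of variables transforming `E` into `E'`,
let `P = (x, y)` be a point on `E` and `P' = (x', y')` its image on `E'`.  Then for every
`n ≥ 1`, `φₙ(P) = u^(2n² − 2) · (u² · φₙ'(P') + r · (ψₙ')²(P'))`, where `φₙ`, `ψₙ` are the
polynomials attached to `E` and `φₙ'`, `ψₙ'` those attached to `E'`. -/
theorem greatest_common_valuation_stmt_3 {K : Type*} [Field K]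
    (W : WeierstrassCurve K) (u : Kˣ) (r s t : K)
    (W' : WeierstrassCurve K) (hW' : W' = (⟨u, r, s, t⟩ : WeierstrassCurve.VariableChange K) • W)
    (x y x' y' : K)
    (hx : x = (u : K) ^ 2 * x' + r)
    (hy : y = (u : K) ^ 3 * y' + (u : K) ^ 2 * s * x' + t)
    (hP : W.toAffine.Equation x y)
    (hP' : W'.toAffine.Equation x' y')
    (n : ℕ) (hn : 1 ≤ n) :
    (W.φ n).evalEval x y =
      (u : K) ^ (2 * n ^ 2 - 2) *
        ((u : K) ^ 2 * (W'.φ n).evalEval x' y' + r * (W'.ψ n).evalEval x' y' ^ 2) :=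
  greatest_common_valuation_stmt_3_general W u r s t W' hW' x y x' y' hx hy n hn
end

section
/- Suppose v(2) = 0 and let k ≥ 1 be an integer (corresponding to Kodaira type I_m^* with m = 2k − 1 odd). Assume v(a₁) ≥ 1, v(a₂) = 1, v(a₃) ≥ k + 1, v(a₄) ≥ k + 2, v(a₆) ≥ 2k + 2, and moreover v(b₆) = 2k + 2 and v(b₈) = 2k + 3. Let P = (x, y) be a point on E with v(x) > 0. Then: (a) if v(x) = 1, then v(φ₂(P)) = v(ψ₃(P)) = 4 and v(ψ₂²(P)) ≥ 4; (b) the range 1 < v(x) < k + 1 is impossible; (c) if v(x) ≥ k + 1, then v(φ₂(P)) = v(ψ₃(P)) = 2k + 3 (= m + 4) and v(ψ₂²(P)) = 2k + 2 (= m + 3). -/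
/-!
In each range of `v(x)` the valuations are read off from a monomial of strictly smallest
valuation in `ψ₂²(x) = 4x³ + b₂x² + 2b₄x + b₆`, in `φ₂(x)` or in `ψ₃(x)`. For `v(x) = 1` this
only gives `v(ψ₂²(x)) ≥ 3`; but on the curve `ψ₂²(x) = (2y + a₁x + a₃)²` has even valuation,
which improves this to `≥ 4` and, for `1 < v(x) < k + 1`, contradicts the odd valuation
`2 v(x) + 1` of the dominant monomial `b₂x²`. Finally `φ₂ + ψ₃ = x ψ₂²`, so whichever of
`φ₂(x)`, `ψ₃(x)` has valuation below `v(x ψ₂²(x))` shares it with the other.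
-/

open Polynomial

namespace WithTop

lemma coe_add_one_le_two_nsmul {t : WithTop ℤ} {m : ℤ} (hm : Odd m)
    (h : (m : WithTop ℤ) ≤ 2 • t) : ((m + 1 : ℤ) : WithTop ℤ) ≤ 2 • t := by
  induction t with
  | top => simp [two_nsmul]
  | coe n =>
    obtain ⟨r, rfl⟩ := hm
    rw [← coe_nsmul, coe_le_coe, nsmul_eq_mul] at h ⊢
    push_cast at h ⊢
    omega

lemma two_nsmul_ne_coe_of_odd (t : WithTop ℤ) {m : ℤ} (hm : Odd m) :
    2 • t ≠ (m : WithTop ℤ) := by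
  induction t with
  | top => simp [two_nsmul]
  | coe n =>
    obtain ⟨r, rfl⟩ := hm
    rw [← coe_nsmul, Ne, coe_inj, nsmul_eq_mul]
    push_cast
    omega

end WithTop

namespace AddValuation

variable {R : Type*} [CommRing R] (v : AddValuation R (WithTop ℤ))

lemma zero_le_map_natCast (n : ℕ) : 0 ≤ v (n : R) := by
  induction n with
  | zero => simp
  | succ n ih => simpa using v.map_le_add ih v.map_one.ge

lemma le_map_ofNat_mul {g : WithTop ℤ} {c : R} (n : ℕ) [n.AtLeastTwo] (h : g ≤ v c) :
    g ≤ v (OfNat.ofNat n * c) := by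
  rw [map_mul]
  exact le_add_of_nonneg_of_le (v.zero_le_map_natCast n) h

lemma coe_le_map_mul {c z : R} {a b : ℤ} (hc : (a : WithTop ℤ) ≤ v c)
    (hz : (b : WithTop ℤ) ≤ v z) : ((a + b : ℤ) : WithTop ℤ) ≤ v (c * z) := by
  rw [map_mul, WithTop.coe_add]
  exact add_le_add hc hz

lemma coe_le_map_pow {z : R} {b : ℤ} (hz : (b : WithTop ℤ) ≤ v z) (n : ℕ) :
    ((n * b : ℤ) : WithTop ℤ) ≤ v (z ^ n) := by
  rw [map_pow, ← nsmul_eq_mul, WithTop.coe_nsmul]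
  exact nsmul_le_nsmul_right hz n

lemma map_pow_eq_coe {z : R} {b : ℤ} (hz : v z = b) (n : ℕ) :
    v (z ^ n) = ((n * b : ℤ) : WithTop ℤ) := by
  rw [map_pow, hz, ← nsmul_eq_mul, WithTop.coe_nsmul]

lemma map_eq_of_add_eq {a b s : R} (h : a + b = s) (ha : v a < v s) : v b = v a := by
  rw [eq_sub_of_add_eq' h, map_sub_eq_of_lt_right v ha]

end AddValuation

namespace WeierstrassCurve

variable {R : Type*} [CommRing R] (W : WeierstrassCurve R)

lemma eval_Ψ₂Sq (x : R) :
    W.Ψ₂Sq.eval x = 4 * x ^ 3 + W.b₂ * x ^ 2 + 2 * W.b₄ * x + W.b₆ := by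
  simp [Ψ₂Sq]

lemma eval_Ψ₃ (x : R) :
    W.Ψ₃.eval x = 3 * x ^ 4 + W.b₂ * x ^ 3 + 3 * W.b₄ * x ^ 2 + 3 * W.b₆ * x + W.b₈ := by
  simp [Ψ₃]

lemma eval_Φ_two (x : R) :
    (W.Φ 2).eval x = x ^ 4 - (W.b₄ * x ^ 2 + 2 * W.b₆ * x + W.b₈) := by
  simp only [Φ_two, eval_sub, eval_mul, eval_pow, eval_C, eval_X]
  ring

lemma eval_Φ_two_add_eval_Ψ₃ (x : R) :
    (W.Φ 2).eval x + W.Ψ₃.eval x = x * W.Ψ₂Sq.eval x := by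
  rw [eval_Φ_two, eval_Ψ₃, eval_Ψ₂Sq]
  ring

lemma eval_Ψ₂Sq_of_equation {x y : R} (h : W.toAffine.Equation x y) :
    W.Ψ₂Sq.eval x = (2 * y + W.a₁ * x + W.a₃) ^ 2 := by
  have := congrArg (evalEval x y) W.ψ₂_sq
  rw [Affine.Equation] at h
  simpa [ψ₂, h, Affine.evalEval_polynomialY, evalEval_C] using this.symm

variable (v : AddValuation R (WithTop ℤ)) {x y : R}

lemma coe_add_one_le_map_eval_Ψ₂Sq (h : W.toAffine.Equation x y) {m : ℤ} (hm : Odd m)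
    (hle : (m : WithTop ℤ) ≤ v (W.Ψ₂Sq.eval x)) :
    ((m + 1 : ℤ) : WithTop ℤ) ≤ v (W.Ψ₂Sq.eval x) := by
  rw [W.eval_Ψ₂Sq_of_equation h, v.map_pow] at hle ⊢
  exact WithTop.coe_add_one_le_two_nsmul hm hle

lemma map_eval_Ψ₂Sq_ne_of_odd (h : W.toAffine.Equation x y) {m : ℤ} (hm : Odd m) :
    v (W.Ψ₂Sq.eval x) ≠ m := by
  rw [W.eval_Ψ₂Sq_of_equation h, v.map_pow]
  exact WithTop.two_nsmul_ne_coe_of_odd _ hm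

lemma map_eval_Ψ₃_eq_of_lt (h : v ((W.Φ 2).eval x) < v (x * W.Ψ₂Sq.eval x)) :
    v (W.Ψ₃.eval x) = v ((W.Φ 2).eval x) :=
  v.map_eq_of_add_eq (W.eval_Φ_two_add_eval_Ψ₃ x) h

lemma map_eval_Φ_two_eq_of_lt (h : v (W.Ψ₃.eval x) < v (x * W.Ψ₂Sq.eval x)) :
    v ((W.Φ 2).eval x) = v (W.Ψ₃.eval x) :=
  v.map_eq_of_add_eq ((add_comm _ _).trans (W.eval_Φ_two_add_eval_Ψ₃ x)) h

lemma map_b₂_eq_one (hv2 : v 2 = 0) (ha₁ : 1 ≤ v W.a₁) (ha₂ : v W.a₂ = 1) : v W.b₂ = 1 := by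
  have h4a₂ : v (4 * W.a₂) = 1 := by
    rw [v.map_mul, show (4 : R) = 2 * 2 by norm_num, v.map_mul, hv2, ha₂, add_zero, zero_add]
  have ha₁sq : (1 : WithTop ℤ) < v (W.a₁ ^ 2) :=
    (WithTop.coe_lt_coe.2 (by omega)).trans_le (v.coe_le_map_pow (b := 1) ha₁ 2)
  rw [b₂, v.map_add_eq_of_lt_right (h4a₂ ▸ ha₁sq), h4a₂]

lemma coe_le_map_b₄ {k : ℤ} (ha₁ : 1 ≤ v W.a₁) (ha₃ : ((k + 1 : ℤ) : WithTop ℤ) ≤ v W.a₃)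
    (ha₄ : ((k + 2 : ℤ) : WithTop ℤ) ≤ v W.a₄) : ((k + 2 : ℤ) : WithTop ℤ) ≤ v W.b₄ :=
  v.map_le_add (v.le_map_ofNat_mul 2 ha₄)
    ((WithTop.coe_le_coe.2 (by omega)).trans (v.coe_le_map_mul (a := 1) ha₁ ha₃))

lemma map_eval_Φ_two_of_map_eq_one {k : ℤ} (hk : 1 ≤ k)
    (hb₄ : ((k + 2 : ℤ) : WithTop ℤ) ≤ v W.b₄) (hb₆ : ((2 * k + 2 : ℤ) : WithTop ℤ) ≤ v W.b₆)
    (hb₈ : ((2 * k + 3 : ℤ) : WithTop ℤ) ≤ v W.b₈) (hx : v x = 1) :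
    v ((W.Φ 2).eval x) = ((4 : ℤ) : WithTop ℤ) := by
  have hx4 : v (x ^ 4) = ((4 : ℤ) : WithTop ℤ) := by
    simpa using v.map_pow_eq_coe (b := 1) hx 4
  have hrest : ((4 : ℤ) : WithTop ℤ) < v (W.b₄ * x ^ 2 + 2 * W.b₆ * x + W.b₈) := by
    refine v.map_lt_add (v.map_lt_add ?_ ?_) ?_
    · exact (WithTop.coe_lt_coe.2 (by omega)).trans_le
        (v.coe_le_map_mul hb₄ (v.coe_le_map_pow (b := 1) hx.ge 2))
    · exact (WithTop.coe_lt_coe.2 (by omega)).trans_le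
        (v.coe_le_map_mul (b := 1) (v.le_map_ofNat_mul 2 hb₆) hx.ge)
    · exact (WithTop.coe_lt_coe.2 (by omega)).trans_le hb₈
  rw [eval_Φ_two, v.map_sub_eq_of_lt_left (hx4 ▸ hrest), hx4]

lemma coe_le_map_eval_Ψ₂Sq_of_map_eq_one {k : ℤ} (hk : 1 ≤ k) (hb₂ : 1 ≤ v W.b₂)
    (hb₄ : ((k + 2 : ℤ) : WithTop ℤ) ≤ v W.b₄) (hb₆ : ((2 * k + 2 : ℤ) : WithTop ℤ) ≤ v W.b₆)
    (hx : v x = 1) : ((3 : ℤ) : WithTop ℤ) ≤ v (W.Ψ₂Sq.eval x) := by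
  rw [eval_Ψ₂Sq]
  refine v.map_le_add (v.map_le_add (v.map_le_add ?_ ?_) ?_) ?_
  · exact v.le_map_ofNat_mul 4 (v.coe_le_map_pow (b := 1) hx.ge 3)
  · exact v.coe_le_map_mul (a := 1) hb₂ (v.coe_le_map_pow (b := 1) hx.ge 2)
  · exact (WithTop.coe_le_coe.2 (by omega)).trans
      (v.coe_le_map_mul (b := 1) (v.le_map_ofNat_mul 2 hb₄) hx.ge)
  · exact (WithTop.coe_le_coe.2 (by omega)).trans hb₆

lemma map_eval_Ψ₂Sq_of_one_lt_of_lt {k n : ℤ} (hb₂ : v W.b₂ = 1)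
    (hb₄ : ((k + 2 : ℤ) : WithTop ℤ) ≤ v W.b₄) (hb₆ : ((2 * k + 2 : ℤ) : WithTop ℤ) ≤ v W.b₆)
    (hx : v x = n) (h1n : 1 < n) (hnk : n < k + 1) :
    v (W.Ψ₂Sq.eval x) = ((2 * n + 1 : ℤ) : WithTop ℤ) := by
  have hdom : v (W.b₂ * x ^ 2) = ((2 * n + 1 : ℤ) : WithTop ℤ) := by
    rw [v.map_mul, hb₂, v.map_pow_eq_coe hx, ← WithTop.coe_one, ← WithTop.coe_add]
    congr 1
    ring
  have hrest : ((2 * n + 1 : ℤ) : WithTop ℤ) < v (4 * x ^ 3 + 2 * W.b₄ * x + W.b₆) := by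
    refine v.map_lt_add (v.map_lt_add ?_ ?_) ?_
    · exact (WithTop.coe_lt_coe.2 (by omega)).trans_le
        (v.le_map_ofNat_mul 4 (v.map_pow_eq_coe hx 3).ge)
    · exact (WithTop.coe_lt_coe.2 (by omega)).trans_le
        (v.coe_le_map_mul (v.le_map_ofNat_mul 2 hb₄) hx.ge)
    · exact (WithTop.coe_lt_coe.2 (by omega)).trans_le hb₆
  rw [show W.Ψ₂Sq.eval x = W.b₂ * x ^ 2 + (4 * x ^ 3 + 2 * W.b₄ * x + W.b₆) by
    rw [eval_Ψ₂Sq]; ring, v.map_add_eq_of_lt_left (hdom ▸ hrest), hdom]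

lemma map_eval_Ψ₂Sq_of_le {k : ℤ} (hk : 0 ≤ k) (hb₂ : 1 ≤ v W.b₂)
    (hb₄ : ((k + 2 : ℤ) : WithTop ℤ) ≤ v W.b₄) (hb₆ : v W.b₆ = ((2 * k + 2 : ℤ) : WithTop ℤ))
    (hx : ((k + 1 : ℤ) : WithTop ℤ) ≤ v x) :
    v (W.Ψ₂Sq.eval x) = ((2 * k + 2 : ℤ) : WithTop ℤ) := by
  have hrest : ((2 * k + 2 : ℤ) : WithTop ℤ) <
      v (4 * x ^ 3 + W.b₂ * x ^ 2 + 2 * W.b₄ * x) := by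
    refine v.map_lt_add (v.map_lt_add ?_ ?_) ?_
    · exact (WithTop.coe_lt_coe.2 (by omega)).trans_le
        (v.le_map_ofNat_mul 4 (v.coe_le_map_pow hx 3))
    · exact (WithTop.coe_lt_coe.2 (by omega)).trans_le
        (v.coe_le_map_mul (a := 1) hb₂ (v.coe_le_map_pow hx 2))
    · exact (WithTop.coe_lt_coe.2 (by omega)).trans_le
        (v.coe_le_map_mul (v.le_map_ofNat_mul 2 hb₄) hx)
  rw [eval_Ψ₂Sq, v.map_add_eq_of_lt_right (hb₆ ▸ hrest), hb₆]

lemma map_eval_Ψ₃_of_le {k : ℤ} (hk : 1 ≤ k) (hb₂ : 1 ≤ v W.b₂)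
    (hb₄ : ((k + 2 : ℤ) : WithTop ℤ) ≤ v W.b₄) (hb₆ : ((2 * k + 2 : ℤ) : WithTop ℤ) ≤ v W.b₆)
    (hb₈ : v W.b₈ = ((2 * k + 3 : ℤ) : WithTop ℤ)) (hx : ((k + 1 : ℤ) : WithTop ℤ) ≤ v x) :
    v (W.Ψ₃.eval x) = ((2 * k + 3 : ℤ) : WithTop ℤ) := by
  have hrest : ((2 * k + 3 : ℤ) : WithTop ℤ) <
      v (3 * x ^ 4 + W.b₂ * x ^ 3 + 3 * W.b₄ * x ^ 2 + 3 * W.b₆ * x) := by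
    refine v.map_lt_add (v.map_lt_add (v.map_lt_add ?_ ?_) ?_) ?_
    · exact (WithTop.coe_lt_coe.2 (by omega)).trans_le
        (v.le_map_ofNat_mul 3 (v.coe_le_map_pow hx 4))
    · exact (WithTop.coe_lt_coe.2 (by omega)).trans_le
        (v.coe_le_map_mul (a := 1) hb₂ (v.coe_le_map_pow hx 3))
    · exact (WithTop.coe_lt_coe.2 (by omega)).trans_le
        (v.coe_le_map_mul (v.le_map_ofNat_mul 3 hb₄) (v.coe_le_map_pow hx 2))
    · exact (WithTop.coe_lt_coe.2 (by omega)).trans_le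
        (v.coe_le_map_mul (v.le_map_ofNat_mul 3 hb₆) hx)
  rw [eval_Ψ₃, v.map_add_eq_of_lt_right (hb₈ ▸ hrest), hb₈]

end WeierstrassCurve

theorem greatest_common_valuation_stmt_6_general {K : Type*} [Field K]
    (v : K → WithTop ℤ)
    (hv_top : ∀ z : K, v z = ⊤ ↔ z = 0)
    (hv_mul : ∀ z w : K, v (z * w) = v z + v w)
    (hv_add : ∀ z w : K, min (v z) (v w) ≤ v (z + w))
    (hv2 : v (2 : K) = 0)
    (k : ℤ) (hk : 1 ≤ k)
    (W : WeierstrassCurve K)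
    (ha₁ : 1 ≤ v W.a₁) (ha₂ : v W.a₂ = 1)
    (ha₃ : ((k + 1 : ℤ) : WithTop ℤ) ≤ v W.a₃)
    (ha₄ : ((k + 2 : ℤ) : WithTop ℤ) ≤ v W.a₄)
    (hb₆ : v W.b₆ = ((2 * k + 2 : ℤ) : WithTop ℤ))
    (hb₈ : v W.b₈ = ((2 * k + 3 : ℤ) : WithTop ℤ))
    (x y : K) (hP : W.toAffine.Equation x y) :
    (v x = 1 →
      v ((W.Φ 2).eval x) = ((4 : ℤ) : WithTop ℤ) ∧
      v (W.Ψ₃.eval x) = ((4 : ℤ) : WithTop ℤ) ∧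
      ((4 : ℤ) : WithTop ℤ) ≤ v (W.Ψ₂Sq.eval x)) ∧
    (¬ (1 < v x ∧ v x < ((k + 1 : ℤ) : WithTop ℤ))) ∧
    (((k + 1 : ℤ) : WithTop ℤ) ≤ v x →
      v ((W.Φ 2).eval x) = ((2 * k + 3 : ℤ) : WithTop ℤ) ∧
      v (W.Ψ₃.eval x) = ((2 * k + 3 : ℤ) : WithTop ℤ) ∧
      v (W.Ψ₂Sq.eval x) = ((2 * k + 2 : ℤ) : WithTop ℤ)) := by
  have hv1 : v 1 = 0 := by
    obtain ⟨n, hn⟩ := WithTop.ne_top_iff_exists.mp (mt (hv_top 1).mp one_ne_zero)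
    have h := hv_mul 1 1
    rw [mul_one, ← hn] at h
    rw [← hn]
    norm_cast at h ⊢
    omega
  let ν : AddValuation K (WithTop ℤ) := .of v ((hv_top 0).mpr rfl) hv1 hv_add hv_mul
  have hb₂ : ν W.b₂ = 1 := W.map_b₂_eq_one ν hv2 ha₁ ha₂
  have hb₄ : ((k + 2 : ℤ) : WithTop ℤ) ≤ ν W.b₄ := W.coe_le_map_b₄ ν ha₁ ha₃ ha₄
  refine ⟨fun hx => ?_, fun ⟨h1x, hxk⟩ => ?_, fun hx => ?_⟩
  · have hΦ := W.map_eval_Φ_two_of_map_eq_one ν hk hb₄ hb₆.ge hb₈.ge hx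
    have hΨ₂Sq := W.coe_add_one_le_map_eval_Ψ₂Sq ν hP (by decide)
      (W.coe_le_map_eval_Ψ₂Sq_of_map_eq_one ν hk hb₂.ge hb₄ hb₆.ge hx)
    refine ⟨hΦ, (W.map_eval_Ψ₃_eq_of_lt ν ?_).trans hΦ, hΨ₂Sq⟩
    exact hΦ ▸ (WithTop.coe_lt_coe.2 (by omega)).trans_le
      (ν.coe_le_map_mul (a := 1) hx.ge hΨ₂Sq)
  · obtain ⟨n, hn⟩ := WithTop.ne_top_iff_exists.mp hxk.ne_top
    have h1n : 1 < n := by rw [← hn] at h1x; exact_mod_cast h1x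
    have hnk : n < k + 1 := by rw [← hn] at hxk; exact_mod_cast hxk
    exact W.map_eval_Ψ₂Sq_ne_of_odd ν hP (odd_two_mul_add_one n)
      (W.map_eval_Ψ₂Sq_of_one_lt_of_lt ν hb₂ hb₄ hb₆.ge hn.symm h1n hnk)
  · have hΨ₂Sq := W.map_eval_Ψ₂Sq_of_le ν (by omega) hb₂.ge hb₄ hb₆ hx
    have hΨ₃ := W.map_eval_Ψ₃_of_le ν hk hb₂.ge hb₄ hb₆.ge hb₈ hx
    refine ⟨(W.map_eval_Φ_two_eq_of_lt ν ?_).trans hΨ₃, hΨ₃, hΨ₂Sq⟩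
    exact hΨ₃ ▸ (WithTop.coe_lt_coe.2 (by omega)).trans_le (ν.coe_le_map_mul hx hΨ₂Sq.ge)

/-- (Kodaira type `I_m^*`, `m = 2k − 1` odd, residue characteristic `≠ 2`.)
Let `K` be a field with a normalised discrete valuation `v` with uniformiser `π`, suppose
`v(2) = 0`, and let `k ≥ 1`.  Let `E/K` be a Weierstrass curve with `v(a₁) ≥ 1`, `v(a₂) = 1`,
`v(a₃) ≥ k + 1`, `v(a₄) ≥ k + 2`, `v(a₆) ≥ 2k + 2`, `v(b₆) = 2k + 2` and `v(b₈) = 2k + 3`.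
Let `P = (x, y)` be a point on `E` with `v(x) > 0`.  Then:
(a) if `v(x) = 1`, then `v(φ₂(P)) = v(ψ₃(P)) = 4` and `v(ψ₂²(P)) ≥ 4`;
(b) the range `1 < v(x) < k + 1` is impossible;
(c) if `v(x) ≥ k + 1`, then `v(φ₂(P)) = v(ψ₃(P)) = 2k + 3` and `v(ψ₂²(P)) = 2k + 2`. -/
theorem greatest_common_valuation_stmt_6 {K : Type*} [Field K]
    (v : K → WithTop ℤ)
    (hv_top : ∀ z : K, v z = ⊤ ↔ z = 0)
    (hv_mul : ∀ z w : K, v (z * w) = v z + v w)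
    (hv_add : ∀ z w : K, min (v z) (v w) ≤ v (z + w))
    (π : K) (hπ : v π = 1)
    (hv2 : v (2 : K) = 0)
    (k : ℤ) (hk : 1 ≤ k)
    (W : WeierstrassCurve K)
    (ha₁ : 1 ≤ v W.a₁) (ha₂ : v W.a₂ = 1)
    (ha₃ : ((k + 1 : ℤ) : WithTop ℤ) ≤ v W.a₃)
    (ha₄ : ((k + 2 : ℤ) : WithTop ℤ) ≤ v W.a₄)
    (ha₆ : ((2 * k + 2 : ℤ) : WithTop ℤ) ≤ v W.a₆)
    (hb₆ : v W.b₆ = ((2 * k + 2 : ℤ) : WithTop ℤ))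
    (hb₈ : v W.b₈ = ((2 * k + 3 : ℤ) : WithTop ℤ))
    (x y : K) (hP : W.toAffine.Equation x y) (hx : 0 < v x) :
    (v x = 1 →
      v ((W.Φ 2).eval x) = ((4 : ℤ) : WithTop ℤ) ∧
      v (W.Ψ₃.eval x) = ((4 : ℤ) : WithTop ℤ) ∧
      ((4 : ℤ) : WithTop ℤ) ≤ v (W.Ψ₂Sq.eval x)) ∧
    (¬ (1 < v x ∧ v x < ((k + 1 : ℤ) : WithTop ℤ))) ∧
    (((k + 1 : ℤ) : WithTop ℤ) ≤ v x →
      v ((W.Φ 2).eval x) = ((2 * k + 3 : ℤ) : WithTop ℤ) ∧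
      v (W.Ψ₃.eval x) = ((2 * k + 3 : ℤ) : WithTop ℤ) ∧
      v (W.Ψ₂Sq.eval x) = ((2 * k + 2 : ℤ) : WithTop ℤ)) :=
  greatest_common_valuation_stmt_6_general v hv_top hv_mul hv_add hv2 k hk W ha₁ ha₂ ha₃ ha₄ hb₆ hb₈
    x y hP
end

section
/- Suppose (as in Step 8 of Tate's algorithm for Kodaira type IV^*) that v(a₁) ≥ 1, v(a₂) ≥ 2, v(a₃) ≥ 2, v(a₄) ≥ 3, v(a₆) ≥ 4 and v(b₆) = v(a₃² + 4a₆) = 4. Let P = (x, y) be a point on E with v(x) > 0 and v(y) > 0, and assume v(φ₃(P)) ≤ v(ψ₃²(P)) (i.e. m_P = 3). Then v(x) ≥ 2, v(ψ₂²(P)) = 4, v(ψ₄(P)) = 5·v(ψ₂(P)), and v(φ₃(P)) = 3·v(ψ₂²(P)) = 12. -/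
open Polynomial

/-!
Everything is read off by comparing valuations term by term: a sum has at least the smallest
valuation of its terms, and exactly that one when a single term is strictly smallest.
The curve equation forces `v x ≥ 2`: if `v x = 1`, the right side `x³ + a₂x² + a₄x + a₆` has
valuation exactly `3`, while the left side `y (y + a₁x + a₃)` has valuation `2` or at least `4`.
Once `v x ≥ 2`, the constant terms dominate: `ψ₂² = Ψ₂Sq(x)` has valuation `v b₆ = 4`, and
`preΨ₄(x)` has valuation `v (b₄b₈ - b₆²) = v (b₆²) = 8`. Finally `v (Ψ₃(x)) ≥ 6`, so in
`φ₃ = x Ψ₃² - preΨ₄ ψ₂²` the second term, of valuation `8 + 4 = 12`, dominates.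
-/

lemma WithTop.eq_one_of_pos_of_lt_two {a : WithTop ℤ} (h0 : 0 < a) (h2 : a < 2) : a = 1 := by
  induction a with
  | top => exact absurd h2 (by decide)
  | coe n =>
    have : (0 : ℤ) < n ∧ n < 2 := ⟨WithTop.coe_lt_coe.mp h0, WithTop.coe_lt_coe.mp h2⟩
    exact congrArg _ (by omega : n = 1)

lemma WithTop.eq_two_of_two_nsmul_eq_four {a : WithTop ℤ} (h : 2 • a = 4) : a = 2 := by
  induction a with
  | top => exact absurd h (by decide)
  | coe n =>
    have : 2 • n = 4 := WithTop.coe_injective ((WithTop.coe_nsmul n 2).trans h)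
    exact congrArg _ (by rw [nsmul_eq_mul] at this; omega : n = 2)

lemma WithTop.eq_zero_of_add_self_eq {a : WithTop ℤ} (ha : a ≠ ⊤) (h : a + a = a) : a = 0 :=
  WithTop.add_left_cancel ha (h.trans (add_zero a).symm)

namespace AddValuation

section

variable {R Γ₀ : Type*} [Ring R] [LinearOrderedAddCommMonoidWithTop Γ₀] (v : AddValuation R Γ₀)

lemma le_map_mul {a b : R} {m n : Γ₀} (ha : m ≤ v a) (hb : n ≤ v b) : m + n ≤ v (a * b) :=
  (v.map_mul a b).symm ▸ add_le_add ha hb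

lemma le_map_pow {a : R} {m : Γ₀} (ha : m ≤ v a) (n : ℕ) : n • m ≤ v (a ^ n) :=
  (v.map_pow a n).symm ▸ nsmul_le_nsmul_right ha n

lemma map_natCast_nonneg (n : ℕ) : 0 ≤ v n := by
  induction n with
  | zero => simp
  | succ n ih => exact Nat.cast_succ (R := R) n ▸ v.map_le_add ih v.map_one.ge

lemma map_ofNat_nonneg (n : ℕ) [n.AtLeastTwo] : 0 ≤ v (OfNat.ofNat n : R) :=
  Nat.cast_ofNat (R := R) (n := n) ▸ v.map_natCast_nonneg n

end

variable {R : Type*} [Ring R] (v : AddValuation R (WithTop ℤ))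

lemma map_mul_add_ne_three {y t : R} (hy : 0 < v y) (ht : 2 ≤ v t) : v (y * (y + t)) ≠ 3 := by
  rcases lt_or_ge (v y) 2 with hy₂ | hy₂
  · have hy₁ : v y = 1 := WithTop.eq_one_of_pos_of_lt_two hy hy₂
    rw [v.map_mul, v.map_add_eq_of_lt_left (hy₂.trans_le ht), hy₁]
    decide
  · exact ne_of_gt (lt_of_lt_of_le (by decide) (v.le_map_mul hy₂ (v.map_le_add hy₂ ht)))

end AddValuation

namespace WeierstrassCurve

variable {R : Type*} [CommRing R] (v : AddValuation R (WithTop ℤ)) (W : WeierstrassCurve R)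

lemma two_le_val_b₂ (ha₁ : 1 ≤ v W.a₁) (ha₂ : 2 ≤ v W.a₂) : 2 ≤ v W.b₂ :=
  v.map_le_add (le_trans (by decide) (v.le_map_pow ha₁ 2))
    (le_trans (by decide) (v.le_map_mul (v.map_ofNat_nonneg 4) ha₂))

lemma three_le_val_b₄ (ha₁ : 1 ≤ v W.a₁) (ha₃ : 2 ≤ v W.a₃) (ha₄ : 3 ≤ v W.a₄) :
    3 ≤ v W.b₄ :=
  v.map_le_add (le_trans (by decide) (v.le_map_mul (v.map_ofNat_nonneg 2) ha₄))
    (le_trans (by decide) (v.le_map_mul ha₁ ha₃))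

lemma six_le_val_b₈ (ha₁ : 1 ≤ v W.a₁) (ha₂ : 2 ≤ v W.a₂) (ha₃ : 2 ≤ v W.a₃)
    (ha₄ : 3 ≤ v W.a₄) (ha₆ : 4 ≤ v W.a₆) : 6 ≤ v W.b₈ := by
  refine v.map_le_sub (v.map_le_add (v.map_le_sub (v.map_le_add ?_ ?_) ?_) ?_) ?_
  · exact le_trans (by decide) (v.le_map_mul (v.le_map_pow ha₁ 2) ha₆)
  · exact le_trans (by decide) (v.le_map_mul (v.le_map_mul (v.map_ofNat_nonneg 4) ha₂) ha₆)
  · exact le_trans (by decide) (v.le_map_mul (v.le_map_mul ha₁ ha₃) ha₄)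
  · exact le_trans (by decide) (v.le_map_mul ha₂ (v.le_map_pow ha₃ 2))
  · exact le_trans (by decide) (v.le_map_pow ha₄ 2)

lemma two_le_val_of_equation (ha₁ : 1 ≤ v W.a₁) (ha₂ : 2 ≤ v W.a₂) (ha₃ : 2 ≤ v W.a₃)
    (ha₄ : 3 ≤ v W.a₄) (ha₆ : 4 ≤ v W.a₆) {x y : R} (hP : W.toAffine.Equation x y)
    (hx : 0 < v x) (hy : 0 < v y) : 2 ≤ v x := by
  by_contra! hx₂
  have hx₁ : v x = 1 := WithTop.eq_one_of_pos_of_lt_two hx hx₂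
  have hrest : 4 ≤ v (W.a₂ * x ^ 2 + W.a₄ * x + W.a₆) := by
    refine v.map_le_add (v.map_le_add ?_ ?_) ha₆
    · exact le_trans (by decide) (v.le_map_mul ha₂ (v.le_map_pow hx₁.ge 2))
    · exact le_trans (by decide) (v.le_map_mul ha₄ hx₁.ge)
  have hcube : v (x ^ 3) = 3 := by rw [v.map_pow, hx₁]; decide
  have hrhs : v (x ^ 3 + (W.a₂ * x ^ 2 + W.a₄ * x + W.a₆)) = 3 := by
    rw [v.map_add_eq_of_lt_left (hcube ▸ lt_of_lt_of_le (by decide) hrest), hcube]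
  have hlhs : v (y * (y + (W.a₁ * x + W.a₃))) ≠ 3 :=
    v.map_mul_add_ne_three hy (v.map_le_add (le_trans (by decide) (v.le_map_mul ha₁ hx₁.ge)) ha₃)
  refine hlhs (hrhs ▸ congrArg v ?_)
  rw [Affine.equation_iff] at hP
  linear_combination hP

variable {x : R}

lemma val_eval_Ψ₂Sq (hx : 2 ≤ v x) (hb₂ : 2 ≤ v W.b₂) (hb₄ : 3 ≤ v W.b₄) (hb₆ : v W.b₆ = 4) :
    v (W.Ψ₂Sq.eval x) = 4 := by
  have hrest : 5 ≤ v (4 * x ^ 3 + W.b₂ * x ^ 2 + 2 * W.b₄ * x) := by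
    refine v.map_le_add (v.map_le_add ?_ ?_) ?_
    · exact le_trans (by decide) (v.le_map_mul (v.map_ofNat_nonneg 4) (v.le_map_pow hx 3))
    · exact le_trans (by decide) (v.le_map_mul hb₂ (v.le_map_pow hx 2))
    · exact le_trans (by decide) (v.le_map_mul (v.le_map_mul (v.map_ofNat_nonneg 2) hb₄) hx)
  simp only [Ψ₂Sq, eval_add, eval_mul, eval_pow, eval_C, eval_X]
  rw [v.map_add_eq_of_lt_right (hb₆ ▸ lt_of_lt_of_le (by decide) hrest), hb₆]

lemma two_nsmul_val_evalEval_ψ_two {y : R} (hP : W.toAffine.Equation x y) :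
    2 • v ((W.ψ 2).evalEval x y) = v (W.Ψ₂Sq.eval x) := by
  rw [← v.map_pow, ψ_two, ← evalEval_pow, ψ₂_sq, evalEval_add, evalEval_C, evalEval_mul, hP,
    mul_zero, add_zero]

lemma val_eval_preΨ₄ (hx : 2 ≤ v x) (hb₂ : 2 ≤ v W.b₂) (hb₄ : 3 ≤ v W.b₄) (hb₆ : v W.b₆ = 4)
    (hb₈ : 6 ≤ v W.b₈) : v (W.preΨ₄.eval x) = 8 := by
  have hconst : v (W.b₄ * W.b₈ - W.b₆ ^ 2) = 8 := by
    have hb₆sq : v (W.b₆ ^ 2) = 8 := by rw [v.map_pow, hb₆]; decide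
    rw [v.map_sub_eq_of_lt_right (hb₆sq ▸ lt_of_lt_of_le (by decide) (v.le_map_mul hb₄ hb₈)),
      hb₆sq]
  have hrest : 9 ≤ v (2 * x ^ 6 + W.b₂ * x ^ 5 + 5 * W.b₄ * x ^ 4 + 10 * W.b₆ * x ^ 3
      + 10 * W.b₈ * x ^ 2 + (W.b₂ * W.b₈ - W.b₄ * W.b₆) * x) := by
    have h0 := v.map_ofNat_nonneg (R := R)
    refine v.map_le_add (v.map_le_add (v.map_le_add (v.map_le_add (v.map_le_add ?_ ?_) ?_) ?_)
      ?_) ?_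
    · exact le_trans (by decide) (v.le_map_mul (h0 2) (v.le_map_pow hx 6))
    · exact le_trans (by decide) (v.le_map_mul hb₂ (v.le_map_pow hx 5))
    · exact le_trans (by decide) (v.le_map_mul (v.le_map_mul (h0 5) hb₄) (v.le_map_pow hx 4))
    · exact le_trans (by decide) (v.le_map_mul (v.le_map_mul (h0 10) hb₆.ge) (v.le_map_pow hx 3))
    · exact le_trans (by decide) (v.le_map_mul (v.le_map_mul (h0 10) hb₈) (v.le_map_pow hx 2))
    · exact le_trans (by decide) (v.le_map_mul
        (v.map_le_sub (le_trans (by decide) (v.le_map_mul hb₂ hb₈)) (v.le_map_mul hb₄ hb₆.ge)) hx)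
  simp only [preΨ₄, eval_add, eval_mul, eval_pow, eval_C, eval_X, eval_ofNat]
  rw [v.map_add_eq_of_lt_right (hconst ▸ lt_of_lt_of_le (by decide) hrest), hconst]

lemma six_le_val_eval_Ψ₃ (hx : 2 ≤ v x) (hb₂ : 2 ≤ v W.b₂) (hb₄ : 3 ≤ v W.b₄)
    (hb₆ : 4 ≤ v W.b₆) (hb₈ : 6 ≤ v W.b₈) : 6 ≤ v (W.Ψ₃.eval x) := by
  have h3 : 0 ≤ v (3 : R) := v.map_ofNat_nonneg 3
  simp only [Ψ₃, eval_add, eval_mul, eval_pow, eval_C, eval_X, eval_ofNat]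
  refine v.map_le_add (v.map_le_add (v.map_le_add (v.map_le_add ?_ ?_) ?_) ?_) hb₈
  · exact le_trans (by decide) (v.le_map_mul h3 (v.le_map_pow hx 4))
  · exact le_trans (by decide) (v.le_map_mul hb₂ (v.le_map_pow hx 3))
  · exact le_trans (by decide) (v.le_map_mul (v.le_map_mul h3 hb₄) (v.le_map_pow hx 2))
  · exact le_trans (by decide) (v.le_map_mul (v.le_map_mul h3 hb₆) hx)

lemma evalEval_ψ_four (y : R) : (W.ψ 4).evalEval x y = W.preΨ₄.eval x * (W.ψ 2).evalEval x y := by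
  rw [ψ_four, ψ_two, evalEval_mul, evalEval_C]

lemma evalEval_φ_three (y : R) : (W.φ 3).evalEval x y
    = x * W.Ψ₃.eval x ^ 2 - W.preΨ₄.eval x * (W.ψ 2).evalEval x y ^ 2 := by
  rw [φ_three, ψ_two]
  simp only [evalEval_sub, evalEval_mul, evalEval_pow, evalEval_C, eval_X]

lemma val_evalEval_φ_three {y : R} (hx : 2 ≤ v x) (hΨ₃ : 6 ≤ v (W.Ψ₃.eval x))
    (hpreΨ₄ : v (W.preΨ₄.eval x) = 8) (hψ₂ : v ((W.ψ 2).evalEval x y) = 2) :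
    v ((W.φ 3).evalEval x y) = 12 := by
  have hdom : v (W.preΨ₄.eval x * (W.ψ 2).evalEval x y ^ 2) = 12 := by
    rw [v.map_mul, v.map_pow, hpreΨ₄, hψ₂]; decide
  rw [evalEval_φ_three, v.map_sub_eq_of_lt_right
    (hdom ▸ lt_of_lt_of_le (by decide) (v.le_map_mul hx (v.le_map_pow hΨ₃ 2))), hdom]

end WeierstrassCurve

theorem greatest_common_valuation_stmt_13_general {K : Type*} [Field K]
    (v : K → WithTop ℤ)
    (hv_top : ∀ z : K, v z = ⊤ ↔ z = 0)
    (hv_mul : ∀ z w : K, v (z * w) = v z + v w)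
    (hv_add : ∀ z w : K, min (v z) (v w) ≤ v (z + w))
    (W : WeierstrassCurve K)
    (ha₁ : 1 ≤ v W.a₁) (ha₂ : ((2 : ℤ) : WithTop ℤ) ≤ v W.a₂)
    (ha₃ : ((2 : ℤ) : WithTop ℤ) ≤ v W.a₃) (ha₄ : ((3 : ℤ) : WithTop ℤ) ≤ v W.a₄)
    (ha₆ : ((4 : ℤ) : WithTop ℤ) ≤ v W.a₆)
    (hb₆ : v (W.a₃ ^ 2 + 4 * W.a₆) = ((4 : ℤ) : WithTop ℤ))
    (x y : K) (hP : W.toAffine.Equation x y) (hx : 0 < v x) (hy : 0 < v y) :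
    ((2 : ℤ) : WithTop ℤ) ≤ v x ∧
    v (W.Ψ₂Sq.eval x) = ((4 : ℤ) : WithTop ℤ) ∧
    v ((W.ψ 4).evalEval x y) = 5 • v ((W.ψ 2).evalEval x y) ∧
    v ((W.φ 3).evalEval x y) = 3 • v (W.Ψ₂Sq.eval x) ∧
    v ((W.φ 3).evalEval x y) = ((12 : ℤ) : WithTop ℤ) := by
  have hv_one : v 1 = 0 := WithTop.eq_zero_of_add_self_eq (mt (hv_top 1).1 one_ne_zero)
    (by rw [← hv_mul, one_mul])
  let w : AddValuation K (WithTop ℤ) := .of v ((hv_top 0).2 rfl) hv_one hv_add hv_mul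
  have hb₂ := W.two_le_val_b₂ w ha₁ ha₂
  have hb₄ := W.three_le_val_b₄ w ha₁ ha₃ ha₄
  have hb₈ := W.six_le_val_b₈ w ha₁ ha₂ ha₃ ha₄ ha₆
  have hx₂ := W.two_le_val_of_equation w ha₁ ha₂ ha₃ ha₄ ha₆ hP hx hy
  have hΨ₂Sq := W.val_eval_Ψ₂Sq w hx₂ hb₂ hb₄ hb₆
  have hψ₂ := WithTop.eq_two_of_two_nsmul_eq_four
    ((W.two_nsmul_val_evalEval_ψ_two w hP).trans hΨ₂Sq)
  have hpreΨ₄ := W.val_eval_preΨ₄ w hx₂ hb₂ hb₄ hb₆ hb₈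
  have hΨ₃ := W.six_le_val_eval_Ψ₃ w hx₂ hb₂ hb₄ hb₆.ge hb₈
  have hφ₃ := W.val_evalEval_φ_three w hx₂ hΨ₃ hpreΨ₄ hψ₂
  refine ⟨hx₂, hΨ₂Sq, ?_, ?_, hφ₃⟩
  · change w _ = 5 • w _
    rw [W.evalEval_ψ_four, w.map_mul, hpreΨ₄, hψ₂]
    decide
  · change w _ = 3 • w _
    rw [hφ₃, hΨ₂Sq]
    decide

/-- (Step 8 of Tate's algorithm, Kodaira type `IV^*`.)  Let `K` be a field with a normalised
discrete valuation `v` with uniformiser `π`, and let `E/K` be a Weierstrass curve with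
`v(a₁) ≥ 1`, `v(a₂) ≥ 2`, `v(a₃) ≥ 2`, `v(a₄) ≥ 3`, `v(a₆) ≥ 4` and
`v(b₆) = v(a₃² + 4a₆) = 4`.  Let `P = (x, y)` be a point on `E` with `v(x) > 0` and
`v(y) > 0`, and assume `v(φ₃(P)) ≤ v(ψ₃²(P))` (i.e. `m_P = 3`).  Then `v(x) ≥ 2`,
`v(ψ₂²(P)) = 4`, `v(ψ₄(P)) = 5·v(ψ₂(P))`, and `v(φ₃(P)) = 3·v(ψ₂²(P)) = 12`. -/
theorem greatest_common_valuation_stmt_13 {K : Type*} [Field K]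
    (v : K → WithTop ℤ)
    (hv_top : ∀ z : K, v z = ⊤ ↔ z = 0)
    (hv_mul : ∀ z w : K, v (z * w) = v z + v w)
    (hv_add : ∀ z w : K, min (v z) (v w) ≤ v (z + w))
    (π : K) (hπ : v π = 1)
    (W : WeierstrassCurve K)
    (ha₁ : 1 ≤ v W.a₁) (ha₂ : ((2 : ℤ) : WithTop ℤ) ≤ v W.a₂)
    (ha₃ : ((2 : ℤ) : WithTop ℤ) ≤ v W.a₃) (ha₄ : ((3 : ℤ) : WithTop ℤ) ≤ v W.a₄)
    (ha₆ : ((4 : ℤ) : WithTop ℤ) ≤ v W.a₆)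
    (hb₆ : v (W.a₃ ^ 2 + 4 * W.a₆) = ((4 : ℤ) : WithTop ℤ))
    (x y : K) (hP : W.toAffine.Equation x y) (hx : 0 < v x) (hy : 0 < v y)
    (hle : v ((W.φ 3).evalEval x y) ≤ v ((W.ψ 3).evalEval x y ^ 2)) :
    ((2 : ℤ) : WithTop ℤ) ≤ v x ∧
    v (W.Ψ₂Sq.eval x) = ((4 : ℤ) : WithTop ℤ) ∧
    v ((W.ψ 4).evalEval x y) = 5 • v ((W.ψ 2).evalEval x y) ∧
    v ((W.φ 3).evalEval x y) = 3 • v (W.Ψ₂Sq.eval x) ∧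
    v ((W.φ 3).evalEval x y) = ((12 : ℤ) : WithTop ℤ) :=
  greatest_common_valuation_stmt_13_general v hv_top hv_mul hv_add W ha₁ ha₂ ha₃ ha₄ ha₆ hb₆ x y hP
    hx hy
end
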